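/- Every good leaf of a simplicial complex is a leaf, and if a simplicial complex Δ admits a good leaf order F_1,...,F_s (F_i is a good leaf of ⟨F_1,...,F_i⟩ for each i), then the corresponding monomials x_{F_s}, x_{F_{s-1}}, ..., x_{F_1} form an M-sequence, and hence I(Δ) is of linear type. -/

import Mathlib

/-- `I = (f i)` is of linear type: the kernel of the Rees presentation
`S[T] → S[It] ⊆ S[t]`, `T i ↦ f i · t`, is generated by its `T`-degree-one part. -/
def IsLinearType {R : Type*} [CommRing R] {σ : Type*} (f : σ → R) : Prop :=
  RingHom.ker (MvPolynomial.aeval (R := R)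
      (fun i : σ => Polynomial.C (f i) * Polynomial.X)).toRingHom =
    Ideal.span {p : MvPolynomial σ R |
      p ∈ RingHom.ker (MvPolynomial.aeval (R := R)
        (fun i : σ => Polynomial.C (f i) * Polynomial.X)).toRingHom ∧
      MvPolynomial.IsHomogeneous p 1}

/-- The squarefree monomial `∏_{j ∈ F} x_j`. -/
noncomputable def sqMon (K : Type*) [Field K] {n : ℕ} (F : Finset (Fin n)) :
    MvPolynomial (Fin n) K :=
  ∏ j ∈ F, MvPolynomial.X j
/-- `F` is a (simplicial) leaf of the complex with facet set `Fs`: either `F` is the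
only facet, or some facet `G ≠ F` satisfies `H ∩ F ⊆ G ∩ F` for every facet `H ≠ F`. -/
def IsLeaf {n : ℕ} (Fs : Finset (Finset (Fin n))) (F : Finset (Fin n)) : Prop :=
  F ∈ Fs ∧ (Fs = {F} ∨ ∃ G ∈ Fs, G ≠ F ∧ ∀ H ∈ Fs, H ≠ F → H ∩ F ⊆ G ∩ F)

/-- `F` and `G` are strong neighbors in the complex with facet set `Fs`. -/
def StrongNeighbors {n : ℕ} (Fs : Finset (Finset (Fin n))) (F G : Finset (Fin n)) : Prop :=
  F ∈ Fs ∧ G ∈ Fs ∧ F ≠ G ∧ ∀ H ∈ Fs, F ∩ G ⊆ H → H = F ∨ H = G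

/-- A simplicial cycle: a complex with no leaf, all of whose nonempty proper
subcomplexes (generated by subsets of the facets) have a leaf. -/
def IsSimplicialCycle {n : ℕ} (Fs : Finset (Finset (Fin n))) : Prop :=
  (¬ ∃ F, IsLeaf Fs F) ∧
    ∀ Gs : Finset (Finset (Fin n)), Gs ⊆ Fs → Gs.Nonempty → Gs ≠ Fs →
      ∃ F, IsLeaf Gs F
/-- `F` is a good leaf of the complex with facet set `Fs`: `F` is a leaf of every
subcomplex (generated by a subset of the facets) to which `F` belongs. -/
def IsGoodLeaf {n : ℕ} (Fs : Finset (Finset (Fin n))) (F : Finset (Fin n)) : Prop :=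
  F ∈ Fs ∧ ∀ Gs ⊆ Fs, F ∈ Gs → IsLeaf Gs F
/-- `F i₀` is an M-element of the squarefree monomial ideal with (minimal) generators
`F j`: there is an ordering `x 0 < x 1 < ⋯ < x (r-1)` of the variables of `F i₀` such
that whenever `x k` divides `F j` with `j ≠ i₀`, then `x k, x (k+1), …, x (r-1)` all
divide `F j`. -/
def IsMElement {n : ℕ} {σ : Type*} (F : σ → Finset (Fin n)) (i₀ : σ) : Prop :=
  ∃ (r : ℕ) (x : Fin r → Fin n), Function.Injective x ∧
    F i₀ = Finset.image x Finset.univ ∧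
    ∀ (k : Fin r) (j : σ), j ≠ i₀ → x k ∈ F j → ∀ k' : Fin r, k ≤ k' → x k' ∈ F j

lemma lemmaM {n s : ℕ} (F : Fin s → Finset (Fin n))
    (hfacets : ∀ i j : Fin s, i ≠ j → ¬ F i ⊆ F j)
    (horder : ∀ i : Fin s,
      IsGoodLeaf (Finset.image F (Finset.univ.filter fun j : Fin s => j ≤ i)) (F i))
    (m : Fin s) :
    ∃ (r : ℕ) (x : Fin r → Fin n), Function.Injective x ∧
      F m = Finset.image x Finset.univ ∧
      ∀ (k : Fin r) (j : Fin s), j < m → x k ∈ F j → ∀ k', k ≤ k' → x k' ∈ F j := by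
  classical
  set d : Fin n → ℕ := fun v => (Finset.univ.filter fun j : Fin s => j < m ∧ v ∈ F j).card with hd
  have hne : ∀ j : Fin s, j < m → F j ≠ F m := by
    intro j hj h
    exact hfacets j m (ne_of_lt hj) (h ▸ subset_rfl)
  have chain : ∀ j k : Fin s, j < m → k < m →
      (F j ∩ F m ⊆ F k ∩ F m) ∨ (F k ∩ F m ⊆ F j ∩ F m) := by
    intro j k hj hk
    set Gs : Finset (Finset (Fin n)) := insert (F m) {F j, F k} with hGs
    have hsub : Gs ⊆ Finset.image F (Finset.univ.filter fun j : Fin s => j ≤ m) := by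
      intro H hH
      simp only [hGs, Finset.mem_insert, Finset.mem_singleton] at hH
      rcases hH with h | h | h <;>
        · subst h
          refine Finset.mem_image.2 ⟨_, Finset.mem_filter.2 ⟨Finset.mem_univ _, ?_⟩, rfl⟩
          first | exact le_refl m | exact le_of_lt hj | exact le_of_lt hk
    have hmem : F m ∈ Gs := Finset.mem_insert_self _ _
    have hleaf := (horder m).2 Gs hsub hmem
    rcases hleaf.2 with h1 | ⟨G, hG, hGne, hall⟩
    · exfalso
      have : F j ∈ Gs := by simp [hGs]
      rw [h1, Finset.mem_singleton] at this
      exact hne j hj this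
    · have hkm : F k ∈ Gs := by simp [hGs]
      have hjm : F j ∈ Gs := by simp [hGs]
      simp only [hGs, Finset.mem_insert, Finset.mem_singleton] at hG
      rcases hG with h | h | h
      · exact absurd h hGne
      · exact Or.inr (h ▸ hall (F k) hkm (hne k hk))
      · exact Or.inl (h ▸ hall (F j) hjm (hne j hj))
  have key : ∀ v ∈ F m, ∀ w ∈ F m, d v ≤ d w → ∀ j : Fin s, j < m → v ∈ F j → w ∈ F j := by
    intro v hv w hw hdvw
    set Sv := Finset.univ.filter fun j : Fin s => j < m ∧ v ∈ F j with hSv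
    set Sw := Finset.univ.filter fun j : Fin s => j < m ∧ w ∈ F j with hSw
    have hsub : Sv ⊆ Sw := by
      have hcs : Sv ⊆ Sw ∨ Sw ⊆ Sv := by
        by_contra hc
        push_neg at hc
        obtain ⟨j, hjv, hjw⟩ := Finset.not_subset.1 hc.1
        obtain ⟨k, hkw, hkv⟩ := Finset.not_subset.1 hc.2
        simp only [hSv, hSw, Finset.mem_filter, Finset.mem_univ, true_and, not_and] at hjv hjw hkw hkv
        rcases chain j k hjv.1 hkw.1 with h | h
        · exact (hkv hkw.1) (Finset.mem_inter.1 (h (Finset.mem_inter.2 ⟨hjv.2, hv⟩))).1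
        · exact (hjw hjv.1) (Finset.mem_inter.1 (h (Finset.mem_inter.2 ⟨hkw.2, hw⟩))).1
      rcases hcs with h | h
      · exact h
      · exact le_of_eq (Finset.eq_of_subset_of_card_le h hdvw).symm
    intro j hj hvj
    have : j ∈ Sv := by simp [hSv, hj, hvj]
    have := hsub this
    simp only [hSw, Finset.mem_filter] at this
    exact this.2.2
  -- sorting
  set rel : Fin n → Fin n → Prop := fun v w => d v < d w ∨ (d v = d w ∧ v ≤ w) with hrel
  haveI : DecidableRel rel := fun v w => by unfold rel; infer_instance
  haveI : IsTrans (Fin n) rel := ⟨by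
    rintro a b c (h | ⟨h, h'⟩) (g | ⟨g, g'⟩)
    · exact Or.inl (h.trans g)
    · exact Or.inl (g ▸ h)
    · exact Or.inl (h ▸ g)
    · exact Or.inr ⟨h.trans g, h'.trans g'⟩⟩
  haveI : IsAntisymm (Fin n) rel := ⟨by
    rintro a b (h | ⟨h, h'⟩) (g | ⟨g, g'⟩)
    · omega
    · omega
    · omega
    · exact le_antisymm h' g'⟩
  haveI : IsTotal (Fin n) rel := ⟨by
    intro a b
    rcases lt_trichotomy (d a) (d b) with h | h | h
    · exact Or.inl (Or.inl h)
    · rcases le_total a b with g | g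
      · exact Or.inl (Or.inr ⟨h, g⟩)
      · exact Or.inr (Or.inr ⟨h.symm, g⟩)
    · exact Or.inr (Or.inl h)⟩
  set l : List (Fin n) := Finset.sort (F m) rel with hl
  have hnodup : l.Nodup := Finset.sort_nodup (F m) rel
  have hsorted : l.Pairwise rel := Finset.pairwise_sort (F m) rel
  have hmeml : ∀ v, v ∈ l ↔ v ∈ F m := fun v => Finset.mem_sort rel
  refine ⟨l.length, l.get, List.nodup_iff_injective_get.1 hnodup, ?_, ?_⟩
  · ext v
    simp only [Finset.mem_image, Finset.mem_univ, true_and]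
    rw [← hmeml, List.mem_iff_get]
  · intro k j hj hx k' hk
    have hmk : l.get k ∈ F m := (hmeml _).1 (l.get_mem _)
    have hmk' : l.get k' ∈ F m := (hmeml _).1 (l.get_mem _)
    have hdd : d (l.get k) ≤ d (l.get k') := by
      rcases eq_or_lt_of_le hk with h | h
      · rw [h]
      · rcases hsorted.rel_get_of_lt h with g | ⟨g, _⟩
        · exact le_of_lt g
        · exact le_of_eq g
    exact key _ hmk _ hmk' hdd j hj hx

namespace Stmt18Aux
open MvPolynomial

variable {K : Type*} [Field K] {n s : ℕ}

noncomputable def ind {n : ℕ} (F : Finset (Fin n)) : Fin n →₀ ℕ :=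
  ∑ j ∈ F, Finsupp.single j 1

lemma ind_apply (F : Finset (Fin n)) (v : Fin n) : ind F v = if v ∈ F then 1 else 0 := by
  classical
  rw [ind, Finset.sum_apply']
  simp only [Finsupp.single_apply]
  rw [Finset.sum_ite_eq' F v (fun _ => 1)]

lemma sqMon_eq (F : Finset (Fin n)) : sqMon K F = monomial (ind F) (1 : K) := by
  classical
  induction F using Finset.induction with
  | empty => simp [sqMon, ind]
  | @insert a Fs h ih =>
    have h1 : ind (insert a Fs) = Finsupp.single a 1 + ind Fs := Finset.sum_insert h
    have h2 : (X a : MvPolynomial (Fin n) K) = monomial (Finsupp.single a 1) 1 := rfl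
    rw [sqMon, Finset.prod_insert h, ← sqMon, ih, h1, h2, monomial_mul, one_mul]

noncomputable def gam (F : Fin s → Finset (Fin n)) (u : Fin s →₀ ℕ) : Fin n →₀ ℕ :=
  u.sum fun i m => m • ind (F i)

variable (F : Fin s → Finset (Fin n))

lemma gam_zero : gam F 0 = 0 := Finsupp.sum_zero_index

lemma gam_add (u v : Fin s →₀ ℕ) : gam F (u + v) = gam F u + gam F v :=
  Finsupp.sum_add_index' (fun _ => zero_smul _ _) (fun i b c => add_smul b c _)

lemma gam_single (i : Fin s) (c : ℕ) : gam F (Finsupp.single i c) = c • ind (F i) :=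
  Finsupp.sum_single_index (zero_smul _ _)

lemma deg_add (u v : Fin s →₀ ℕ) : (u + v).degree = u.degree + v.degree := by
  simp only [Finsupp.degree_eq_weight_one, map_add]

lemma deg_single (i : Fin s) (c : ℕ) : (Finsupp.single i c).degree = c := by
  classical
  rcases eq_or_ne c 0 with h | h
  · simp [h]
  · rw [Finsupp.degree_single]

lemma gam_apply (u : Fin s →₀ ℕ) (v : Fin n) :
    gam F u v = ∑ j ∈ u.support, u j * ind (F j) v := by
  rw [gam, Finsupp.sum_apply]
  rfl

/-- basis monomials -/
noncomputable def E (u : Fin s →₀ ℕ) (α : Fin n →₀ ℕ) :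
    MvPolynomial (Fin s) (MvPolynomial (Fin n) K) :=
  monomial u (monomial α (1 : K))

variable (K) in
noncomputable def phi :
    MvPolynomial (Fin s) (MvPolynomial (Fin n) K) →ₐ[MvPolynomial (Fin n) K]
      Polynomial (MvPolynomial (Fin n) K) :=
  MvPolynomial.aeval (R := MvPolynomial (Fin n) K)
    (fun i : Fin s => Polynomial.C (sqMon K (F i)) * Polynomial.X)

variable (K) in
noncomputable def LinSpan : Ideal (MvPolynomial (Fin s) (MvPolynomial (Fin n) K)) :=
  Ideal.span {p : MvPolynomial (Fin s) (MvPolynomial (Fin n) K) |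
      p ∈ RingHom.ker (MvPolynomial.aeval (R := MvPolynomial (Fin n) K)
        (fun i : Fin s => Polynomial.C (sqMon K (F i)) * Polynomial.X)).toRingHom ∧
      MvPolynomial.IsHomogeneous p 1}

lemma phi_monomial (u : Fin s →₀ ℕ) (r : MvPolynomial (Fin n) K) :
    phi K F (monomial u r) =
      Polynomial.C (r * monomial (gam F u) (1 : K)) * Polynomial.X ^ u.degree := by
  classical
  rw [phi, aeval_monomial, Polynomial.algebraMap_eq]
  have : (u.prod fun i k => (Polynomial.C (sqMon K (F i)) * Polynomial.X) ^ k) =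
      Polynomial.C (monomial (gam F u) (1 : K)) * Polynomial.X ^ u.degree := by
    induction u using Finsupp.induction with
    | zero => simp [gam_zero, monomial_zero']
    | single_add a b f ha hb ih =>
      rw [Finsupp.prod_add_index (fun _ _ => pow_zero _) (fun _ _ b₁ b₂ => pow_add _ b₁ b₂),
        Finsupp.prod_single_index
          (h := fun i k => (Polynomial.C (sqMon K (F i)) * Polynomial.X) ^ k) (pow_zero _), ih, gam_add, deg_add, gam_single, deg_single,
        mul_pow, ← Polynomial.C_pow, sqMon_eq, monomial_pow, one_pow, pow_add]
      rw [mul_comm (Polynomial.C ((monomial (b • ind (F a))) 1)) (Polynomial.X ^ b),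
        mul_assoc, ← mul_assoc (Polynomial.C _), ← Polynomial.C_mul, monomial_mul, one_mul]
      ring
  rw [this, ← mul_assoc, ← Polynomial.C_mul]

lemma linSpan_le_ker :
    LinSpan K F ≤ RingHom.ker (phi K F).toRingHom :=
  Ideal.span_le.2 fun _ hp => hp.1

lemma phi_linSpan {p : MvPolynomial (Fin s) (MvPolynomial (Fin n) K)}
    (hp : p ∈ LinSpan K F) : phi K F p = 0 :=
  linSpan_le_ker F hp

lemma ker_coeff (p : MvPolynomial (Fin s) (MvPolynomial (Fin n) K))
    (hp : phi K F p = 0) (β : Fin n →₀ ℕ) (d : ℕ) :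
    ∑ u ∈ p.support,
      (if d = u.degree then
        (if gam F u ≤ β then coeff (β - gam F u) (coeff u p) else 0) else 0) = 0 := by
  classical
  have h0 : coeff β (Polynomial.coeff (phi K F p) d) = 0 := by rw [hp]; simp
  rw [show phi K F p = phi K F (∑ u ∈ p.support, monomial u (coeff u p)) by rw [← as_sum]]
    at h0
  rw [map_sum, Polynomial.finset_sum_coeff] at h0
  rw [coeff_sum] at h0
  refine Eq.trans (Finset.sum_congr rfl fun u _ => ?_) h0
  rw [phi_monomial, Polynomial.coeff_C_mul, Polynomial.coeff_X_pow, mul_ite, mul_one, mul_zero,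
    apply_ite (coeff β), coeff_zero, coeff_mul_monomial', mul_one]

lemma move_mem (w : Fin s →₀ ℕ) (i j : Fin s) (a b : Fin n →₀ ℕ)
    (h : a + ind (F i) = b + ind (F j)) :
    (E (w + Finsupp.single i 1) a - E (w + Finsupp.single j 1) b : _) ∈ LinSpan K F := by
  classical
  have hg : (monomial (Finsupp.single i 1) (monomial a (1 : K)) -
      monomial (Finsupp.single j 1) (monomial b (1 : K)) :
        MvPolynomial (Fin s) (MvPolynomial (Fin n) K)) ∈ LinSpan K F := by
    apply Ideal.subset_span
    constructor
    · rw [RingHom.mem_ker]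
      have h1 : ∀ (k : Fin s) (c : Fin n →₀ ℕ),
          (phi K F) (monomial (Finsupp.single k 1) (monomial c (1:K))) =
            Polynomial.C (monomial (c + ind (F k)) (1:K)) * Polynomial.X := by
        intro k c
        rw [phi_monomial, gam_single, one_smul, deg_single, pow_one, monomial_mul, one_mul]
      show phi K F _ = 0
      rw [map_sub, h1, h1, h, sub_self]
    · exact (isHomogeneous_monomial _ (deg_single i 1)).sub
        (isHomogeneous_monomial _ (deg_single j 1))
  have heq : (E (w + Finsupp.single i 1) a - E (w + Finsupp.single j 1) b : _) =
      monomial w (1 : MvPolynomial (Fin n) K) *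
        (monomial (Finsupp.single i 1) (monomial a (1 : K)) -
          monomial (Finsupp.single j 1) (monomial b (1 : K))) := by
    rw [mul_sub, monomial_mul, monomial_mul, one_mul, one_mul, E, E]
  rw [heq]
  exact Ideal.mul_mem_left _ _ hg

lemma decomp (u : Fin s →₀ ℕ) (j : Fin s) (hj : j ∈ u.support) :
    ∃ w : Fin s →₀ ℕ, u = w + Finsupp.single j 1 := by
  classical
  refine ⟨u - Finsupp.single j 1, ?_⟩
  have hj1 : 1 ≤ u j := Nat.one_le_iff_ne_zero.2 (Finsupp.mem_support_iff.1 hj)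
  ext i
  simp only [Finsupp.add_apply, Finsupp.tsub_apply, Finsupp.single_apply]
  by_cases h : j = i
  · subst h; simp; omega
  · simp [h]

lemma ind_le_gam (u : Fin s →₀ ℕ) (j : Fin s) (hj : j ∈ u.support) :
    ind (F j) ≤ gam F u := by
  obtain ⟨w, hw⟩ := decomp u j hj
  rw [hw, gam_add, gam_single, one_smul]
  exact le_add_self

lemma exists_pivot (i₀ : Fin s) (r : ℕ) (x : Fin r → Fin n)
    (himg : F i₀ = Finset.image x Finset.univ)
    (hM : ∀ (k : Fin r) (j : Fin s), j < i₀ → x k ∈ F j → ∀ k', k ≤ k' → x k' ∈ F j)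
    (u : Fin s →₀ ℕ) (α : Fin n →₀ ℕ) (hu : u ≠ 0) (hsupp : ∀ j ∈ u.support, j < i₀)
    (hdiv : ind (F i₀) ≤ α + gam F u) :
    ∃ j ∈ u.support, ind (F i₀) ≤ α + ind (F j) := by
  classical
  obtain ⟨j₀, hj₀⟩ := Finsupp.support_nonempty_iff.2 hu
  set T : Finset (Fin r) := Finset.univ.filter (fun k => ∃ j ∈ u.support, x k ∈ F j) with hT
  have hgam0 : ∀ v : Fin n, (∀ j ∈ u.support, v ∉ F j) → gam F u v = 0 := by
    intro v hv
    rw [gam_apply]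
    exact Finset.sum_eq_zero fun j hj => by rw [ind_apply, if_neg (hv j hj), mul_zero]
  by_cases hTne : T.Nonempty
  · set k₀ := T.min' hTne with hk₀
    have hk₀T : k₀ ∈ T := T.min'_mem hTne
    obtain ⟨j₁, hj₁u, hj₁x⟩ := (Finset.mem_filter.1 hk₀T).2
    refine ⟨j₁, hj₁u, ?_⟩
    rw [Finsupp.le_def]
    intro v
    rw [Finsupp.add_apply, ind_apply (F i₀)]
    by_cases hv : v ∈ F i₀
    · rw [if_pos hv]
      obtain ⟨k, -, hk⟩ := Finset.mem_image.1 (himg ▸ hv)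
      rcases le_or_gt k₀ k with hle | hlt
      · have : x k ∈ F j₁ := hM k₀ j₁ (hsupp j₁ hj₁u) hj₁x k hle
        rw [ind_apply, if_pos (hk ▸ this)]
        omega
      · have hknot : k ∉ T := fun hkT => absurd (T.min'_le k hkT) (not_le.2 hlt)
        have hnone : ∀ j ∈ u.support, x k ∉ F j := by
          intro j hj hxk
          exact hknot (Finset.mem_filter.2 ⟨Finset.mem_univ _, ⟨j, hj, hxk⟩⟩)
        have h0 : gam F u v = 0 := hgam0 v (hk ▸ hnone)
        have := hdiv v
        rw [Finsupp.add_apply, ind_apply, if_pos hv, h0] at this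
        omega
    · rw [if_neg hv]; omega
  · refine ⟨j₀, hj₀, ?_⟩
    have hα : ∀ v ∈ F i₀, 1 ≤ α v := by
      intro v hv
      obtain ⟨k, -, hk⟩ := Finset.mem_image.1 (himg ▸ hv)
      have hnone : ∀ j ∈ u.support, v ∉ F j := by
        intro j hj hvj
        exact hTne ⟨k, Finset.mem_filter.2 ⟨Finset.mem_univ _, ⟨j, hj, hk ▸ hvj⟩⟩⟩
      have := hdiv v
      rw [Finsupp.add_apply, ind_apply, if_pos hv, hgam0 v hnone] at this
      omega
    rw [Finsupp.le_def]
    intro v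
    rw [Finsupp.add_apply, ind_apply (F i₀)]
    by_cases hv : v ∈ F i₀
    · rw [if_pos hv]
      have := hα v hv
      omega
    · rw [if_neg hv]; omega

lemma connect (hMall : ∀ m : Fin s, ∃ (r : ℕ) (x : Fin r → Fin n), Function.Injective x ∧
      F m = Finset.image x Finset.univ ∧
      ∀ (k : Fin r) (j : Fin s), j < m → x k ∈ F j → ∀ k', k ≤ k' → x k' ∈ F j) :
    ∀ (d : ℕ) (u v : Fin s →₀ ℕ) (α β : Fin n →₀ ℕ), u.degree = d → v.degree = d →
      α + gam F u = β + gam F v → (E u α - E v β : _) ∈ LinSpan K F := by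
  intro d
  induction d using Nat.strong_induction_on with
  | _ d IH =>
  intro u v α β hu hv heq
  rcases Nat.eq_zero_or_pos d with hd0 | hdpos
  · subst hd0
    have hu0 : u = 0 := (Finsupp.degree_eq_zero_iff u).1 hu
    have hv0 : v = 0 := (Finsupp.degree_eq_zero_iff v).1 hv
    subst hu0; subst hv0
    rw [gam_zero, add_zero, add_zero] at heq
    subst heq
    rw [sub_self]
    exact zero_mem _
  · have hune : u ≠ 0 := by intro h; rw [h, map_zero] at hu; omega
    have hvne : v ≠ 0 := by intro h; rw [h, map_zero] at hv; omega
    have hsne : (u.support ∪ v.support).Nonempty := by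
      obtain ⟨j, hj⟩ := Finsupp.support_nonempty_iff.2 hune
      exact ⟨j, Finset.mem_union_left _ hj⟩
    set i₁ := (u.support ∪ v.support).max' hsne with hi₁
    have hle : ∀ j ∈ u.support ∪ v.support, j ≤ i₁ := fun j hj => Finset.le_max' _ j hj
    have hdivM : ind (F i₁) ≤ α + gam F u := by
      rcases Finset.mem_union.1 ((u.support ∪ v.support).max'_mem hsne) with h | h
      · exact le_trans (ind_le_gam F u i₁ h) le_add_self
      · rw [heq]; exact le_trans (ind_le_gam F v i₁ h) le_add_self
    obtain ⟨r, x, hinj, himg, hM⟩ := hMall i₁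
    have creation : ∀ (u' : Fin s →₀ ℕ) (α' : Fin n →₀ ℕ), u'.degree = d →
        (∀ j ∈ u'.support, j ≤ i₁) → α' + gam F u' = α + gam F u →
        ∃ (u₁ : Fin s →₀ ℕ) (α₁ : Fin n →₀ ℕ), i₁ ∈ u₁.support ∧ u₁.degree = d ∧
          α₁ + gam F u₁ = α + gam F u ∧ (E u' α' - E u₁ α₁ : _) ∈ LinSpan K F := by
      intro u' α' hdeg hsub hgam
      by_cases hmem : i₁ ∈ u'.support
      · exact ⟨u', α', hmem, hdeg, hgam, by rw [sub_self]; exact zero_mem _⟩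
      · have hlt : ∀ j ∈ u'.support, j < i₁ := fun j hj =>
          lt_of_le_of_ne (hsub j hj) (fun h => hmem (h ▸ hj))
        have hu'ne : u' ≠ 0 := by intro h; rw [h, map_zero] at hdeg; omega
        have hdiv' : ind (F i₁) ≤ α' + gam F u' := by rw [hgam]; exact hdivM
        obtain ⟨j, hju, hj⟩ := exists_pivot F i₁ r x himg hM u' α' hu'ne hlt hdiv'
        obtain ⟨w, hw⟩ := decomp u' j hju
        set α₁ := α' + ind (F j) - ind (F i₁) with hα₁
        have haux : α₁ + ind (F i₁) = α' + ind (F j) := tsub_add_cancel_of_le hj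
        refine ⟨w + Finsupp.single i₁ 1, α₁, ?_, ?_, ?_, ?_⟩
        · rw [Finsupp.mem_support_iff, Finsupp.add_apply, Finsupp.single_eq_same]; omega
        · rw [deg_add, deg_single, ← hdeg, hw, deg_add, deg_single]
        · have h1 : α₁ + gam F (w + Finsupp.single i₁ 1) = α' + gam F u' := by
            rw [gam_add, gam_single, one_smul, hw, gam_add, gam_single, one_smul]
            calc α₁ + (gam F w + ind (F i₁)) = α₁ + ind (F i₁) + gam F w := by abel
            _ = α' + ind (F j) + gam F w := by rw [haux]
            _ = α' + (gam F w + ind (F j)) := by abel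
          rw [h1, hgam]
        · rw [hw]
          exact move_mem F w j i₁ α' α₁ haux.symm
    obtain ⟨u₁, α₁, hu₁mem, hu₁deg, hu₁gam, hu₁E⟩ :=
      creation u α hu (fun j hj => hle j (Finset.mem_union_left _ hj)) rfl
    obtain ⟨v₁, β₁, hv₁mem, hv₁deg, hv₁gam, hv₁E⟩ :=
      creation v β hv (fun j hj => hle j (Finset.mem_union_right _ hj)) heq.symm
    obtain ⟨u₂, hu₂⟩ := decomp u₁ i₁ hu₁mem
    obtain ⟨v₂, hv₂⟩ := decomp v₁ i₁ hv₁mem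
    have heq₂ : α₁ + gam F u₂ = β₁ + gam F v₂ := by
      have h1 : α₁ + gam F u₂ + ind (F i₁) = β₁ + gam F v₂ + ind (F i₁) := by
        have e1 : α₁ + gam F u₂ + ind (F i₁) = α₁ + gam F u₁ := by
          rw [hu₂, gam_add, gam_single, one_smul]; abel
        have e2 : β₁ + gam F v₂ + ind (F i₁) = β₁ + gam F v₁ := by
          rw [hv₂, gam_add, gam_single, one_smul]; abel
        rw [e1, e2, hu₁gam, hv₁gam]
      exact add_right_cancel h1
    have hdeg₂ : u₂.degree = d - 1 := by
      have h := hu₁deg; rw [hu₂, deg_add, deg_single] at h; omega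
    have hdeg₂' : v₂.degree = d - 1 := by
      have h := hv₁deg; rw [hv₂, deg_add, deg_single] at h; omega
    have hmid : (E u₂ α₁ - E v₂ β₁ : _) ∈ LinSpan K F :=
      IH (d - 1) (by omega) u₂ v₂ α₁ β₁ hdeg₂ hdeg₂' heq₂
    have hfac : (E u₁ α₁ - E v₁ β₁ : _) =
        monomial (Finsupp.single i₁ 1) (1 : MvPolynomial (Fin n) K) * (E u₂ α₁ - E v₂ β₁) := by
      rw [mul_sub, E, E, E, E, monomial_mul, monomial_mul, one_mul, one_mul, hu₂, hv₂]
      rw [add_comm u₂ _, add_comm v₂ _]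
    have hmid' : (E u₁ α₁ - E v₁ β₁ : _) ∈ LinSpan K F := by
      rw [hfac]; exact Ideal.mul_mem_left _ _ hmid
    have hsplit : (E u α - E v β : MvPolynomial (Fin s) (MvPolynomial (Fin n) K)) =
        (E u α - E u₁ α₁) + (E u₁ α₁ - E v₁ β₁) - (E v β - E v₁ β₁) := by ring
    rw [hsplit]
    exact sub_mem (add_mem hu₁E hmid') hv₁E

noncomputable def psupp (p : MvPolynomial (Fin s) (MvPolynomial (Fin n) K)) :
    Finset ((Fin s →₀ ℕ) × (Fin n →₀ ℕ)) :=
  p.support.biUnion fun u => (coeff u p).support.image fun α => (u, α)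

lemma mem_psupp (p : MvPolynomial (Fin s) (MvPolynomial (Fin n) K))
    (u : Fin s →₀ ℕ) (α : Fin n →₀ ℕ) :
    (u, α) ∈ psupp p ↔ coeff α (coeff u p) ≠ 0 := by
  classical
  constructor
  · intro h
    obtain ⟨u', hu', h'⟩ := Finset.mem_biUnion.1 h
    obtain ⟨α', hα', he⟩ := Finset.mem_image.1 h'
    obtain ⟨rfl, rfl⟩ := Prod.mk.injEq .. ▸ he
    exact MvPolynomial.mem_support_iff.1 hα'
  · intro h
    have hu : u ∈ p.support := MvPolynomial.mem_support_iff.2 fun h0 => by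
      rw [h0] at h; simp at h
    exact Finset.mem_biUnion.2 ⟨u, hu, Finset.mem_image.2
      ⟨α, MvPolynomial.mem_support_iff.2 h, rfl⟩⟩

lemma ker_mem (hMall : ∀ m : Fin s, ∃ (r : ℕ) (x : Fin r → Fin n), Function.Injective x ∧
      F m = Finset.image x Finset.univ ∧
      ∀ (k : Fin r) (j : Fin s), j < m → x k ∈ F j → ∀ k', k ≤ k' → x k' ∈ F j) :
    ∀ (N : ℕ) (p : MvPolynomial (Fin s) (MvPolynomial (Fin n) K)),
      (psupp p).card ≤ N → phi K F p = 0 → p ∈ LinSpan K F := by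
  classical
  intro N
  induction N with
  | zero =>
    intro p hcard _
    have hp0 : p = 0 := by
      by_contra hne
      obtain ⟨u, hu⟩ := MvPolynomial.support_nonempty.2 hne
      have hcu : coeff u p ≠ 0 := MvPolynomial.mem_support_iff.1 hu
      obtain ⟨α, hα⟩ := MvPolynomial.support_nonempty.2 hcu
      have : (u, α) ∈ psupp p :=
        (mem_psupp p u α).2 (MvPolynomial.mem_support_iff.1 hα)
      have := Finset.card_pos.2 ⟨_, this⟩
      omega
    rw [hp0]; exact zero_mem _
  | succ N IHN =>
    intro p hcard hp
    by_cases hne : p = 0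
    · rw [hne]; exact zero_mem _
    obtain ⟨u₀, hu₀⟩ := MvPolynomial.support_nonempty.2 hne
    have hcu₀ : coeff u₀ p ≠ 0 := MvPolynomial.mem_support_iff.1 hu₀
    obtain ⟨α₀, hα₀⟩ := MvPolynomial.support_nonempty.2 hcu₀
    set c := coeff α₀ (coeff u₀ p) with hc
    have hcne : c ≠ 0 := MvPolynomial.mem_support_iff.1 hα₀
    set β := α₀ + gam F u₀ with hβ
    set d := u₀.degree with hd
    have hsum := ker_coeff F p hp β d
    have ht₀ : (if d = u₀.degree then
        (if gam F u₀ ≤ β then coeff (β - gam F u₀) (coeff u₀ p) else 0) else 0) = c := by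
      rw [if_pos hd, if_pos (show gam F u₀ ≤ β by rw [hβ]; exact le_add_self), hβ,
        add_tsub_cancel_right]
    obtain ⟨u₁, hu₁p, hu₁ne, htu₁⟩ : ∃ u₁ ∈ p.support, u₁ ≠ u₀ ∧
        (if d = u₁.degree then
          (if gam F u₁ ≤ β then coeff (β - gam F u₁) (coeff u₁ p) else 0) else 0) ≠ 0 := by
      by_contra hno
      push_neg at hno
      have hs2 : ∑ u ∈ p.support, (if d = u.degree then
          (if gam F u ≤ β then coeff (β - gam F u) (coeff u p) else 0) else 0) =
          (if d = u₀.degree then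
          (if gam F u₀ ≤ β then coeff (β - gam F u₀) (coeff u₀ p) else 0) else 0) :=
        Finset.sum_eq_single u₀ (fun b hb hbne => hno b hb hbne) (fun h => absurd hu₀ h)
      rw [hsum, ht₀] at hs2
      exact hcne hs2.symm
    have hd₁ : d = u₁.degree := by
      by_contra h; rw [if_neg h] at htu₁; exact htu₁ rfl
    have hle₁ : gam F u₁ ≤ β := by
      by_contra h; rw [if_pos hd₁, if_neg h] at htu₁; exact htu₁ rfl
    have hc₁ : coeff (β - gam F u₁) (coeff u₁ p) ≠ 0 := by
      rw [if_pos hd₁, if_pos hle₁] at htu₁; exact htu₁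
    set α₁ := β - gam F u₁ with hα₁
    have hβ₁ : α₁ + gam F u₁ = β := tsub_add_cancel_of_le hle₁
    have hq : (E u₀ α₀ - E u₁ α₁ : _) ∈ LinSpan K F :=
      connect F hMall d u₀ u₁ α₀ α₁ rfl hd₁.symm (by rw [hβ₁])
    set Cc : MvPolynomial (Fin s) (MvPolynomial (Fin n) K) :=
      monomial 0 (monomial 0 c) with hCc
    set q : MvPolynomial (Fin s) (MvPolynomial (Fin n) K) := E u₀ α₀ - E u₁ α₁ with hq'
    set p' := p - Cc * q with hp'
    have hmm : ∀ (u : Fin s →₀ ℕ) (α : Fin n →₀ ℕ),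
        Cc * E u α = monomial u (monomial α c) := by
      intro u α
      rw [hCc, E, monomial_mul, monomial_mul, zero_add, zero_add, mul_one]
    have hqq : Cc * q = monomial u₀ (monomial α₀ c) - monomial u₁ (monomial α₁ c) := by
      rw [hq', mul_sub, hmm, hmm]
    have hcoe : ∀ (u : Fin s →₀ ℕ) (α : Fin n →₀ ℕ), coeff α (coeff u p') =
        coeff α (coeff u p) - (if u₀ = u ∧ α₀ = α then c else 0)
          + (if u₁ = u ∧ α₁ = α then c else 0) := by
      intro u α
      rw [hp', hqq]
      simp only [map_sub, MvPolynomial.coeff_sub, coeff_monomial]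
      by_cases h1 : u₀ = u <;> by_cases h2 : α₀ = α <;>
        by_cases h3 : u₁ = u <;> by_cases h4 : α₁ = α <;>
        simp [h1, h2, h3, h4, coeff_monomial] <;> ring
    have hp'ker : phi K F p' = 0 := by
      rw [hp', map_sub, hp, map_mul, phi_linSpan F hq, mul_zero, sub_zero]
    have hne01 : (u₀, α₀) ≠ (u₁, α₁) := by
      intro h
      injection h with h1 h2
      exact hu₁ne h1.symm
    have hss : psupp p' ⊆ (psupp p).erase (u₀, α₀) := by
      rintro ⟨u, α⟩ hmem
      have hval := (mem_psupp p' u α).1 hmem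
      rw [hcoe] at hval
      rw [Finset.mem_erase]
      by_cases h0 : (u₀, α₀) = (u, α)
      · exfalso
        injection h0 with h1 h2
        have h3 : ¬ (u₁ = u ∧ α₁ = α) := by
          rintro ⟨g1, g2⟩
          exact hne01 (by rw [h1, h2, g1, g2])
        rw [if_pos ⟨h1, h2⟩, if_neg h3] at hval
        have : coeff α (coeff u p) = c := by rw [← h1, ← h2]
        rw [this] at hval
        simp at hval
      · refine ⟨fun h => h0 h.symm, ?_⟩
        by_cases h1 : u₁ = u ∧ α₁ = α
        · rw [mem_psupp]
          rw [← h1.1, ← h1.2]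
          exact hc₁
        · rw [if_neg (fun h => h0 (by rw [h.1, h.2])), if_neg h1, sub_zero, add_zero] at hval
          exact (mem_psupp p u α).2 hval
    have hmem₀ : (u₀, α₀) ∈ psupp p := (mem_psupp p u₀ α₀).2 hcne
    have hcard' : (psupp p').card ≤ N := by
      have h1 := Finset.card_le_card hss
      have h2 : ((psupp p).erase (u₀, α₀)).card = (psupp p).card - 1 :=
        Finset.card_erase_of_mem hmem₀
      have h3 := Finset.card_pos.2 ⟨_, hmem₀⟩
      omega
    have hp'mem : p' ∈ LinSpan K F := IHN p' hcard' hp'ker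
    have : p = p' + Cc * q := by rw [hp']; ring
    rw [this]
    exact add_mem hp'mem (Ideal.mul_mem_left _ _ hq)

lemma ker_eq_linSpan (hMall : ∀ m : Fin s, ∃ (r : ℕ) (x : Fin r → Fin n),
      Function.Injective x ∧ F m = Finset.image x Finset.univ ∧
      ∀ (k : Fin r) (j : Fin s), j < m → x k ∈ F j → ∀ k', k ≤ k' → x k' ∈ F j) :
    RingHom.ker (phi K F).toRingHom = LinSpan K F := by
  apply le_antisymm
  · intro p hp
    exact ker_mem F hMall (psupp p).card p le_rfl (RingHom.mem_ker.1 hp)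
  · exact linSpan_le_ker F

end Stmt18Aux


/-- Every good leaf is a leaf; and if `F 0, …, F (s-1)` is a good leaf order of a
simplicial complex `Δ` (each `F i` is a good leaf of `⟨F 0, …, F i⟩`), then the
monomials `x_{F (s-1)}, x_{F (s-2)}, …, x_{F 0}` form an M-sequence, and hence the
facet ideal `I(Δ)` is of linear type. -/
theorem stmt18 {K : Type*} [Field K] {n s : ℕ} (F : Fin s → Finset (Fin n))
    (hfacets : ∀ i j : Fin s, i ≠ j → ¬ F i ⊆ F j)
    (horder : ∀ i : Fin s,
      IsGoodLeaf (Finset.image F (Finset.univ.filter fun j : Fin s => j ≤ i)) (F i)) :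
    (∀ (Fs : Finset (Finset (Fin n))) (G : Finset (Fin n)),
        IsGoodLeaf Fs G → IsLeaf Fs G) ∧
      (∀ i : Fin s,
        IsMElement
          (fun j : {j : Fin s // i ≤ j} =>
            F ⟨s - 1 - (j.1 : ℕ), by have := j.1.isLt; omega⟩)
          ⟨i, le_refl i⟩) ∧
      IsLinearType (fun i : Fin s => sqMon K (F i)) := by
  have hMall : ∀ m : Fin s, ∃ (r : ℕ) (x : Fin r → Fin n), Function.Injective x ∧
      F m = Finset.image x Finset.univ ∧
      ∀ (k : Fin r) (j : Fin s), j < m → x k ∈ F j → ∀ k', k ≤ k' → x k' ∈ F j :=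
    lemmaM F hfacets horder
  refine ⟨?_, ?_, ?_⟩
  · intro Fs G h
    exact h.2 Fs (fun x hx => hx) h.1
  · intro i
    have hm : (s - 1 - (i : ℕ)) < s := by have := i.isLt; omega
    obtain ⟨r, x, hinj, himg, hM⟩ := hMall ⟨s - 1 - (i : ℕ), hm⟩
    refine ⟨r, x, hinj, himg, ?_⟩
    intro k j hj hxk k' hk'
    have hij : (i : ℕ) < (j.1 : ℕ) := by
      rcases lt_or_eq_of_le j.2 with h | h
      · exact h
      · exact absurd (Subtype.ext h.symm) hj
    have hlt : (⟨s - 1 - (j.1 : ℕ), by have := j.1.isLt; omega⟩ : Fin s) <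
        ⟨s - 1 - (i : ℕ), hm⟩ := by
      have h1 := j.1.isLt
      have h2 := i.isLt
      simp only [Fin.mk_lt_mk]
      omega
    exact hM k ⟨s - 1 - (j.1 : ℕ), by have := j.1.isLt; omega⟩ hlt hxk k' hk'
  · exact Stmt18Aux.ker_eq_linSpan F hMall
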